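/- Let U be a free ultrafilter on ℕ and (A n) a sequence of finite-dimensional C*-algebras. If w ∈ ∏_U A n satisfies w* w = 1, then w w* = 1. Consequently, an ultraproduct of finite-dimensional C*-algebras contains no proper isometry, and a unital C*-algebra containing an element w with w* w = 1 and w w* ≠ 1 admits no injective unital *-homomorphism into ∏_U A n. -/

import Mathlib

/-! In a finite-dimensional algebra one-sided inverses are two-sided, so `x x*` and `x* x` are
invertible together; as `ab` and `ba` always have the same nonzero spectrum, `x x*` and `x* x`
have the same spectrum. Hence the self-adjoint elements `x x* - 1` and `x* x - 1` have the same
spectral radius, i.e. the same norm. Applied coordinatewise to `x ∈ ℓ∞(A)` this gives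
`lim_U ‖x n (x n)* - 1‖ = lim_U ‖(x n)* x n - 1‖`, so `π x` is unitary as soon as it is an
isometry. -/

open Filter Topology ENNReal

noncomputable section

section UltraCStar

variable (U : Ultrafilter ℕ) (A : ℕ → Type*) [∀ n, CStarAlgebra (A n)] [∀ n, Nontrivial (A n)]

/-- The limit along the ultrafilter `U` of the sequence of norms of `x ∈ ℓ∞(A)`. -/
def ulim (x : lp A ∞) : ℝ := limUnder (U : Filter ℕ) fun n => ‖x n‖

variable {U A}

theorem exists_tendsto_norm (x : lp A ∞) :
    ∃ r : ℝ, Tendsto (fun n => ‖x n‖) (U : Filter ℕ) (𝓝 r) := by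
  obtain ⟨C, hC⟩ := (lp.memℓp x).bddAbove
  have h : (↑(U.map fun n => ‖x n‖) : Filter ℝ) ≤ 𝓟 (Set.Icc 0 C) := by
    rw [Ultrafilter.coe_map, le_principal_iff, mem_map]
    exact univ_mem' fun n => ⟨norm_nonneg _, hC ⟨n, rfl⟩⟩
  obtain ⟨r, -, hr⟩ := isCompact_Icc.ultrafilter_le_nhds (U.map fun n => ‖x n‖) h
  exact ⟨r, by rwa [Ultrafilter.coe_map] at hr⟩

theorem tendsto_ulim (x : lp A ∞) :
    Tendsto (fun n => ‖x n‖) (U : Filter ℕ) (𝓝 (ulim U A x)) :=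
  tendsto_nhds_limUnder (exists_tendsto_norm x)

theorem ulim_eq {x : lp A ∞} {r : ℝ}
    (h : Tendsto (fun n => ‖x n‖) (U : Filter ℕ) (𝓝 r)) : ulim U A x = r :=
  tendsto_nhds_unique (tendsto_ulim x) h

theorem ulim_zero : ulim U A 0 = 0 :=
  ulim_eq <| by
    have : ∀ n, ‖(0 : lp A ∞) n‖ = (0 : ℝ) := fun n => by simp
    simpa [this] using tendsto_const_nhds

theorem ulim_neg (x : lp A ∞) : ulim U A (-x) = ulim U A x :=
  ulim_eq <| (tendsto_ulim x).congr fun n => by simp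

theorem ulim_add_le (x y : lp A ∞) : ulim U A (x + y) ≤ ulim U A x + ulim U A y := by
  refine le_of_tendsto_of_tendsto' (tendsto_ulim (x + y))
    ((tendsto_ulim x).add (tendsto_ulim y)) fun n => ?_
  calc ‖(x + y) n‖ = ‖x n + y n‖ := by simp
    _ ≤ ‖x n‖ + ‖y n‖ := norm_add_le _ _

theorem ulim_mul_le (x y : lp A ∞) : ulim U A (x * y) ≤ ulim U A x * ulim U A y := by
  refine le_of_tendsto_of_tendsto' (tendsto_ulim (x * y))
    ((tendsto_ulim x).mul (tendsto_ulim y)) fun n => ?_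
  calc ‖(x * y) n‖ = ‖x n * y n‖ := by simp
    _ ≤ ‖x n‖ * ‖y n‖ := norm_mul_le _ _

theorem ulim_smul (c : ℂ) (x : lp A ∞) : ulim U A (c • x) = ‖c‖ * ulim U A x :=
  ulim_eq <| ((tendsto_ulim x).const_mul ‖c‖).congr fun n => by
    simp [norm_smul]

theorem ulim_star (x : lp A ∞) : ulim U A (star x) = ulim U A x :=
  ulim_eq <| (tendsto_ulim x).congr fun n => by
    simp [lp.coeFn_star]

variable (U A)

/-- The additive seminorm `x ↦ lim_U ‖x n‖` on `ℓ∞(A)`. -/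
def upAddSeminorm : AddGroupSeminorm (lp A ∞) where
  toFun := ulim U A
  map_zero' := ulim_zero
  add_le' := ulim_add_le
  neg' := ulim_neg

/-- Type synonym of `ℓ∞(A)` carrying the seminorm `x ↦ lim_U ‖x n‖`. -/
def PreUP (_U : Ultrafilter ℕ) (A : ℕ → Type*) [∀ n, CStarAlgebra (A n)] : Type _ := lp A ∞

/-- The identity map `ℓ∞(A) → PreUP U A`. -/
def toPre : lp A ∞ → PreUP U A := id

instance : Ring (PreUP U A) := (inferInstance : Ring (lp A ∞))

instance : StarRing (PreUP U A) := (inferInstance : StarRing (lp A ∞))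

instance : SeminormedRing (PreUP U A) :=
  { (upAddSeminorm U A).toSeminormedAddCommGroup,
    (inferInstance : Ring (lp A ∞)) with
    norm_mul_le := ulim_mul_le }

instance : NormedAlgebra ℂ (PreUP U A) :=
  { (inferInstance : Algebra ℂ (lp A ∞)) with
    norm_smul_le := fun c x => le_of_eq (ulim_smul c x) }

instance : NormedStarGroup (PreUP U A) := ⟨fun x => le_of_eq (ulim_star x)⟩

/-- The ultraproduct `∏_U A n`, realized as the separation quotient of `ℓ∞(A)`
equipped with the seminorm `x ↦ lim_U ‖x n‖`. -/
abbrev UProd : Type _ := SeparationQuotient (PreUP U A)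

instance : Star (SeparationQuotient (PreUP U A)) where
  star := SeparationQuotient.lift
    (fun x : PreUP U A => SeparationQuotient.mk (star x)) fun x y h => by
      try dsimp only
      refine SeparationQuotient.mk_eq_mk.2 ?_
      rw [Metric.inseparable_iff, dist_eq_norm] at h ⊢
      rwa [← star_sub, norm_star]

theorem mk_star (x : PreUP U A) :
    (SeparationQuotient.mk (star x) : UProd U A) = star (SeparationQuotient.mk x) := rfl

instance : StarRing (SeparationQuotient (PreUP U A)) where
  star_involutive := by
    refine SeparationQuotient.surjective_mk.forall.2 fun x => ?_
    rw [← mk_star, ← mk_star, star_star]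
  star_mul := by
    intro a b
    obtain ⟨x, rfl⟩ := SeparationQuotient.surjective_mk a
    obtain ⟨y, rfl⟩ := SeparationQuotient.surjective_mk b
    rw [← SeparationQuotient.mk_mul, ← mk_star, ← mk_star, ← mk_star,
      ← SeparationQuotient.mk_mul, star_mul]
  star_add := by
    intro a b
    obtain ⟨x, rfl⟩ := SeparationQuotient.surjective_mk a
    obtain ⟨y, rfl⟩ := SeparationQuotient.surjective_mk b
    rw [← SeparationQuotient.mk_add, ← mk_star, ← mk_star, ← mk_star,
      ← SeparationQuotient.mk_add, star_add]

/-- The quotient map `π : ℓ∞(A) → ∏_U A n`. -/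
def uproj (x : lp A ∞) : UProd U A := SeparationQuotient.mk (toPre U A x)

variable {U A}

theorem uproj_add (x y : lp A ∞) : uproj U A (x + y) = uproj U A x + uproj U A y := rfl

theorem uproj_mul (x y : lp A ∞) : uproj U A (x * y) = uproj U A x * uproj U A y := rfl

theorem uproj_star (x : lp A ∞) : uproj U A (star x) = star (uproj U A x) := rfl

theorem uproj_one : uproj U A 1 = 1 := rfl

theorem norm_uproj (x : lp A ∞) : ‖uproj U A x‖ = ulim U A x := rfl

end UltraCStar


universe u

theorem spectrum.mul_comm_of_isDedekindFiniteMonoid {𝕜 A : Type*} [Field 𝕜] [Ring A]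
    [Algebra 𝕜 A] [IsDedekindFiniteMonoid A] (a b : A) :
    spectrum 𝕜 (a * b) = spectrum 𝕜 (b * a) := by
  ext r
  rcases eq_or_ne r 0 with rfl | hr
  · simp only [spectrum.zero_mem_iff, IsUnit.mul_iff, and_comm]
  · simpa [hr] using congrArg (r ∈ ·) (spectrum.nonzero_mul_comm (𝕜 := 𝕜) a b)

theorem IsSelfAdjoint.norm_eq_of_spectrum_eq {A : Type*} [CStarAlgebra A] {a b : A}
    (ha : IsSelfAdjoint a) (hb : IsSelfAdjoint b) (h : spectrum ℂ a = spectrum ℂ b) :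
    ‖a‖ = ‖b‖ := by
  have : (‖a‖₊ : ℝ≥0∞) = ‖b‖₊ := by
    rw [← ha.spectralRadius_eq_nnnorm, ← hb.spectralRadius_eq_nnnorm, spectralRadius,
      spectralRadius, h]
  exact congrArg NNReal.toReal (ENNReal.coe_inj.mp this)

theorem CStarAlgebra.norm_mul_star_sub_one {A : Type*} [CStarAlgebra A]
    [IsDedekindFiniteMonoid A] (x : A) : ‖x * star x - 1‖ = ‖star x * x - 1‖ := by
  refine ((IsSelfAdjoint.mul_star_self x).sub (.one A)).norm_eq_of_spectrum_eq
    ((IsSelfAdjoint.star_mul_self x).sub (.one A)) ?_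
  rw [← map_one (algebraMap ℂ A), ← spectrum.sub_singleton_eq, ← spectrum.sub_singleton_eq,
    spectrum.mul_comm_of_isDedekindFiniteMonoid]

theorem IsDedekindFiniteMonoid.of_finiteDimensional (K A : Type*) [Field K] [Ring A]
    [Algebra K A] [FiniteDimensional K A] : IsDedekindFiniteMonoid A :=
  have := IsArtinianRing.of_finite K A
  inferInstance

section UltraCStar

variable {U : Ultrafilter ℕ} {A : ℕ → Type*} [∀ n, CStarAlgebra (A n)] [∀ n, Nontrivial (A n)]

theorem uproj_surjective : Function.Surjective (uproj U A) :=
  SeparationQuotient.surjective_mk (X := PreUP U A)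

theorem uproj_eq_uproj_iff {x y : lp A ∞} : uproj U A x = uproj U A y ↔ ulim U A (x - y) = 0 := by
  rw [uproj, uproj, SeparationQuotient.mk_eq_mk, Metric.inseparable_iff, dist_eq_norm]
  rfl

theorem ulim_mul_star_sub_one [∀ n, IsDedekindFiniteMonoid (A n)] (x : lp A ∞) :
    ulim U A (x * star x - 1) = ulim U A (star x * x - 1) := by
  unfold ulim
  congr! 2 with n
  exact CStarAlgebra.norm_mul_star_sub_one (x n)

theorem UProd.mul_star_eq_one_of_star_mul_eq_one [∀ n, IsDedekindFiniteMonoid (A n)]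
    {w : UProd U A} (hw : star w * w = 1) : w * star w = 1 := by
  obtain ⟨x, rfl⟩ := uproj_surjective w
  rw [← uproj_star, ← uproj_mul, ← uproj_one, uproj_eq_uproj_iff] at hw ⊢
  rwa [ulim_mul_star_sub_one]

end UltraCStar

theorem Function.Injective.mul_star_eq_one_of_star_mul_eq_one {D E F : Type*}
    [Monoid D] [StarMul D] [Monoid E] [StarMul E] [FunLike F D E] [MonoidHomClass F D E]
    [StarHomClass F D E] {φ : F}
    (hφ : Function.Injective φ) (hE : ∀ w : E, star w * w = 1 → w * star w = 1) {v : D}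
    (hv : star v * v = 1) : v * star v = 1 :=
  hφ <| by
    rw [map_mul, map_star, hE _ (by rw [← map_star, ← map_mul, hv, map_one]), map_one]

theorem stmt13_general (U : Ultrafilter ℕ)
    (A : ℕ → Type*) [∀ n, CStarAlgebra (A n)] [∀ n, Nontrivial (A n)]
    [∀ n, FiniteDimensional ℂ (A n)] :
    (∀ w : UProd U A, star w * w = 1 → w * star w = 1) ∧
    (∀ (D : Type u) [CStarAlgebra D], ∀ v : D, star v * v = 1 → v * star v ≠ 1 →
      ∀ φ : D →⋆ₐ[ℂ] UProd U A, ¬ Function.Injective φ) := by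
  have (n : ℕ) : IsDedekindFiniteMonoid (A n) := .of_finiteDimensional ℂ (A n)
  have isometry_unitary : ∀ w : UProd U A, star w * w = 1 → w * star w = 1 :=
    fun _ => UProd.mul_star_eq_one_of_star_mul_eq_one
  refine ⟨isometry_unitary, fun D _ v hv hv' φ hφ => hv' ?_⟩
  exact hφ.mul_star_eq_one_of_star_mul_eq_one isometry_unitary hv

/-- in an ultraproduct of finite-dimensional C*-algebras every isometry
(`w* w = 1`) is a unitary (`w w* = 1`); consequently a unital C*-algebra containing a
proper isometry admits no injective unital `*`-homomorphism into the ultraproduct. -/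
theorem stmt13 (U : Ultrafilter ℕ) (hU : (U : Filter ℕ) ≤ Filter.cofinite)
    (A : ℕ → Type*) [∀ n, CStarAlgebra (A n)] [∀ n, Nontrivial (A n)]
    [∀ n, FiniteDimensional ℂ (A n)] :
    (∀ w : UProd U A, star w * w = 1 → w * star w = 1) ∧
    (∀ (D : Type u) [CStarAlgebra D], ∀ v : D, star v * v = 1 → v * star v ≠ 1 →
      ∀ φ : D →⋆ₐ[ℂ] UProd U A, ¬ Function.Injective φ) :=
  stmt13_general U A
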